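/- arXiv:math/0108207 — 2 statements merged into one kernel-verified Lean document; each statement's English description precedes it below -/
import Mathlib

section
/- Let L be an invertible well-bred element of A_R ⊗ End(ℂᴺ) (i.e. L₁a₃ = R₃₁a₃L₁ and L₁a₃† = a₃†R₁₃L₁). Then c₁₂ := L₁⁻¹L₂⁻¹R₁₂L₁L₂ is central in A_R (its matrix entries commute with all aᵢ and aᵢ†), and moreover c₁₂⁻¹ = c₂₁. -/
open scoped BigOperators

noncomputable section

/-- Unitarity `R₁₂ R₂₁ = I` of the R-matrix, in components. -/
def UnitarityC (N : ℕ) (R : Fin N × Fin N → Fin N × Fin N → ℂ) : Prop :=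
  ∀ i j k l : Fin N,
    (∑ p : Fin N, ∑ q : Fin N, R (i, j) (p, q) * R (q, p) (l, k)) =
      if i = k ∧ j = l then 1 else 0

/-- The Yang–Baxter equation `R₁₂ R₁₃ R₂₃ = R₂₃ R₁₃ R₁₂`, in components. -/
def YBEC (N : ℕ) (R : Fin N × Fin N → Fin N × Fin N → ℂ) : Prop :=
  ∀ i j m k l n : Fin N,
    (∑ p : Fin N, ∑ q : Fin N, ∑ t : Fin N,
        R (i, j) (p, q) * R (p, m) (k, t) * R (q, t) (l, n)) =
      ∑ p : Fin N, ∑ q : Fin N, ∑ t : Fin N,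
        R (j, m) (q, t) * R (i, t) (p, n) * R (p, q) (k, l)

/-- The Zamolodchikov–Faddeev exchange relations
`a₁a₂ = R₂₁a₂a₁`, `a₁†a₂† = a₂†a₁†R₂₁`, `a₁a₂† = a₂†R₁₂a₁ + δ₁₂`,
in components, for generators `a i`, `ad i` of a `ℂ`-algebra `A`. -/
def IsZF (N : ℕ) {A : Type*} [Ring A] [Algebra ℂ A]
    (R : Fin N × Fin N → Fin N × Fin N → ℂ) (a ad : Fin N → A) : Prop :=
  (∀ i j : Fin N, a i * a j =
      ∑ k : Fin N, ∑ l : Fin N, R (j, i) (k, l) • (a k * a l)) ∧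
  (∀ i j : Fin N, ad i * ad j =
      ∑ k : Fin N, ∑ l : Fin N, R (k, l) (j, i) • (ad k * ad l)) ∧
  (∀ i j : Fin N, a i * ad j =
      (∑ k : Fin N, ∑ l : Fin N, R (i, k) (l, j) • (ad k * a l)) +
        if i = j then 1 else 0)

/-- The well-bred conditions `L₁a₂ = R₂₁a₂L₁` and `L₁a₂† = a₂†R₁₂L₁`,
in components, for `L ∈ A_R ⊗ End(ℂᴺ)`. -/
def IsWellBred (N : ℕ) {A : Type*} [Ring A] [Algebra ℂ A]
    (R : Fin N × Fin N → Fin N × Fin N → ℂ) (a ad : Fin N → A)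
    (L : Fin N → Fin N → A) : Prop :=
  (∀ i j m : Fin N, L i j * a m =
      ∑ p : Fin N, ∑ q : Fin N, R (m, i) (q, p) • (a q * L p j)) ∧
  (∀ i j m : Fin N, L i j * ad m =
      ∑ p : Fin N, ∑ q : Fin N, R (i, q) (p, m) • (ad q * L p j))

/-- The entries of `c₁₂ = L₁⁻¹L₂⁻¹R₁₂L₁L₂`, in components:
`c_{(i,m),(j,n)} = Σ R_{(p,q),(r,s)} (L⁻¹)ᵢₚ (L⁻¹)ₘq Lᵣⱼ Lₛₙ`. -/
def cMat (N : ℕ) {A : Type*} [Ring A] [Algebra ℂ A]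
    (R : Fin N × Fin N → Fin N × Fin N → ℂ) (L Linv : Fin N → Fin N → A)
    (i m j n : Fin N) : A :=
  ∑ p : Fin N, ∑ q : Fin N, ∑ r : Fin N, ∑ s : Fin N,
    R (p, q) (r, s) • (Linv i p * Linv m q * L r j * L s n)

/-- The entries of `c₂₁ = L₂⁻¹L₁⁻¹R₂₁L₂L₁`. -/
def c21Mat (N : ℕ) {A : Type*} [Ring A] [Algebra ℂ A]
    (R : Fin N × Fin N → Fin N × Fin N → ℂ) (L Linv : Fin N → Fin N → A)
    (i m j n : Fin N) : A :=
  ∑ p : Fin N, ∑ q : Fin N, ∑ r : Fin N, ∑ s : Fin N,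
    R (q, p) (s, r) • (Linv m q * Linv i p * L s n * L r j)

/-
Work with matrices over `A` acting on `ℂᴺ ⊗ ℂᴺ ⊗ ℂᴺ`, with a generator `v` (`a` or `a†`) placed in
the third factor. Well-bredness says `L₁ v₃ = T₃₁ v₃ L₁` and `L₂ v₃ = T₃₂ v₃ L₂`, where `T = R` for
`v = a` and `T` is a partial transpose of `R` for `v = a†`; moreover `L₁` commutes with `T₃₂`, `L₂`
with `T₃₁`, and `R₁₂`, having scalar entries, with `v₃`. Moving `v₃` from the right of
`c₁₂ = L₁⁻¹L₂⁻¹R₁₂L₁L₂` to its left produces `R₁₂T₃₂T₃₁`, which the Yang–Baxter equation turns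
into `T₃₁T₃₂R₁₂`, and `T₃₁`, `T₃₂` are absorbed again by `L₁⁻¹`, `L₂⁻¹`. Conjugating by the flip
`P₁₂` turns `c₁₂` into `c₂₁ = L₂⁻¹L₁⁻¹R₂₁L₂L₁`, which is `c₁₂⁻¹` since `R₂₁ = R₁₂⁻¹` by unitarity.
-/

open Matrix

theorem Units.inv_mul_mul_eq_of_mul_eq {S : Type*} [Monoid S] (l : Sˣ) {x a : S}
    (h : ↑l * a = x * a * l) : ↑l⁻¹ * (x * a) = a * ↑l⁻¹ := by
  rw [Units.inv_mul_eq_iff_eq_mul, ← mul_assoc, h, Units.mul_inv_cancel_right]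

theorem commute_conj_of_exchange {S : Type*} [Monoid S] (l₁ l₂ : Sˣ) {r x y a : S}
    (h₁ : ↑l₁ * a = x * a * l₁) (h₂ : ↑l₂ * a = y * a * l₂)
    (hl₁y : Commute (l₁ : S) y) (hl₂x : Commute (l₂ : S) x)
    (hra : Commute r a) (hrxy : r * y * x = x * y * r) :
    Commute (↑l₁⁻¹ * ↑l₂⁻¹ * r * l₁ * l₂) a := by
  have hx : ↑l₁⁻¹ * (x * a) = a * ↑l₁⁻¹ := l₁.inv_mul_mul_eq_of_mul_eq h₁
  have hy : ↑l₂⁻¹ * (y * a) = a * ↑l₂⁻¹ := l₂.inv_mul_mul_eq_of_mul_eq h₂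
  calc ↑l₁⁻¹ * ↑l₂⁻¹ * r * l₁ * l₂ * a
      = ↑l₁⁻¹ * ↑l₂⁻¹ * r * l₁ * (l₂ * a) := by simp only [mul_assoc]
    _ = ↑l₁⁻¹ * ↑l₂⁻¹ * r * (l₁ * y) * a * l₂ := by rw [h₂]; simp only [mul_assoc]
    _ = ↑l₁⁻¹ * ↑l₂⁻¹ * r * y * (l₁ * a) * l₂ := by rw [hl₁y.eq]; simp only [mul_assoc]
    _ = ↑l₁⁻¹ * ↑l₂⁻¹ * (r * y * x) * a * l₁ * l₂ := by rw [h₁]; simp only [mul_assoc]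
    _ = ↑l₁⁻¹ * ↑l₂⁻¹ * x * y * (r * a) * l₁ * l₂ := by rw [hrxy]; simp only [mul_assoc]
    _ = ↑l₁⁻¹ * (↑l₂⁻¹ * x) * (y * a) * r * l₁ * l₂ := by rw [hra.eq]; simp only [mul_assoc]
    _ = ↑l₁⁻¹ * (x * (↑l₂⁻¹ * (y * a))) * r * l₁ * l₂ := by
        rw [hl₂x.units_inv_left.eq]; simp only [mul_assoc]
    _ = ↑l₁⁻¹ * (x * a) * ↑l₂⁻¹ * r * l₁ * l₂ := by rw [hy]; simp only [mul_assoc]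
    _ = a * (↑l₁⁻¹ * ↑l₂⁻¹ * r * l₁ * l₂) := by rw [hx]; simp only [mul_assoc]

section

variable {n : Type*} [Fintype n]

-- `R₁₂ T₃₂ T₃₁ = T₃₁ T₃₂ R₁₂`, in components.
def MixedYBE (R T : n × n → n × n → ℂ) : Prop :=
  ∀ i m t j k u, ∑ p, ∑ r, ∑ q, R (i, m) (p, q) * T (t, q) (r, k) * T (r, p) (u, j) =
    ∑ p, ∑ q, ∑ r, T (t, i) (r, p) * T (r, m) (u, q) * R (p, q) (j, k)

end

theorem YBEC.mixedYBE {N : ℕ} {R : Fin N × Fin N → Fin N × Fin N → ℂ} (h : YBEC N R) :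
    MixedYBE R R := fun i m t j k u =>
  calc _ = ∑ r, ∑ p, ∑ q, R (i, m) (p, q) * R (t, q) (r, k) * R (r, p) (u, j) := Finset.sum_comm
    _ = ∑ r, ∑ p, ∑ q, R (t, i) (r, p) * R (r, m) (u, q) * R (p, q) (j, k) := (h t i m u j k).symm
    _ = _ := Finset.sum_comm.trans (Finset.sum_congr rfl fun _ _ => Finset.sum_comm)

-- The coefficients of the exchange relation `L₁ a₃† = a₃† R₁₃ L₁`.
theorem YBEC.mixedYBE_dual {N : ℕ} {R : Fin N × Fin N → Fin N × Fin N → ℂ} (h : YBEC N R) :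
    MixedYBE R (fun x y => R (x.2, y.1) (y.2, x.1)) := fun i m t j k u =>
  calc _ = ∑ p, ∑ q, ∑ r, R (i, m) (p, q) * R (p, u) (j, r) * R (q, r) (k, t) :=
        Finset.sum_congr rfl fun _ _ => Finset.sum_comm.trans <|
          Finset.sum_congr rfl fun _ _ => Finset.sum_congr rfl fun _ _ => mul_right_comm _ _ _
    _ = ∑ p, ∑ q, ∑ r, R (m, u) (q, r) * R (i, r) (p, t) * R (p, q) (j, k) := h i m u j k t
    _ = _ := Finset.sum_congr rfl fun _ _ => Finset.sum_congr rfl fun _ _ =>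
          Finset.sum_congr rfl fun _ _ => by rw [mul_comm (R (m, u) _)]

section

variable {A : Type*} [Ring A]

section Ampliation

variable {ι κ : Type*} [Fintype ι] [Fintype κ] [DecidableEq ι] [DecidableEq κ]

def ampliation : Matrix ι ι A →+* Matrix (ι × κ) (ι × κ) A :=
  (blockDiagonalRingHom ι κ A).comp (Pi.constRingHom κ (Matrix ι ι A))

theorem ampliation_apply (X : Matrix ι ι A) (x y : ι × κ) :
    ampliation X x y = if x.2 = y.2 then X x.1 y.1 else 0 :=
  rfl

/- `v₃` is encoded as the square matrix `1 ⊗ v 𝟙ᵀ`, all of whose columns are `v`, so that it lives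
in the same matrix ring as `L₁`, `L₂` and `R₁₂`. -/
def vecSlot (v : κ → A) : Matrix (ι × κ) (ι × κ) A :=
  of fun x y => if x.1 = y.1 then v x.2 else 0

theorem ampliation_mul_vecSlot_apply (X : Matrix ι ι A) (v : κ → A) (x y : ι × κ) :
    (ampliation X * vecSlot v : Matrix (ι × κ) (ι × κ) A) x y = X x.1 y.1 * v x.2 := by
  simp [ampliation_apply, vecSlot, mul_apply, Fintype.sum_prod_type]

theorem vecSlot_mul_ampliation_apply (X : Matrix ι ι A) (v : κ → A) (x y : ι × κ) :
    (vecSlot v * ampliation X : Matrix (ι × κ) (ι × κ) A) x y = v x.2 * X x.1 y.1 := by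
  simp [ampliation_apply, vecSlot, mul_apply, Fintype.sum_prod_type]

theorem commute_ampliation_vecSlot_iff (X : Matrix ι ι A) (v : κ → A) :
    Commute (ampliation X : Matrix (ι × κ) (ι × κ) A) (vecSlot v) ↔
      ∀ i j t, Commute (X i j) (v t) := by
  refine ⟨fun h i j t => ?_, fun h => ?_⟩
  · have := congrFun (congrFun h.eq (i, t)) (j, t)
    rwa [ampliation_mul_vecSlot_apply, vecSlot_mul_ampliation_apply] at this
  · ext x y
    rw [ampliation_mul_vecSlot_apply, vecSlot_mul_ampliation_apply]
    exact h _ _ _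

end Ampliation

section TwoSites

variable {n : Type*} [Fintype n]

def swapFactors : Matrix (n × n) (n × n) A ≃+* Matrix (n × n) (n × n) A :=
  reindexRingEquiv A (Equiv.prodComm n n)

theorem swapFactors_apply (X : Matrix (n × n) (n × n) A) (x y : n × n) :
    swapFactors X x y = X x.swap y.swap :=
  rfl

theorem swapFactors_swapFactors (X : Matrix (n × n) (n × n) A) :
    swapFactors (swapFactors X) = X :=
  rfl

variable [DecidableEq n]

def cMatrix (R : Matrix (n × n) (n × n) A) (L Linv : Matrix n n A) :
    Matrix (n × n) (n × n) A :=
  ampliation Linv * (swapFactors (ampliation Linv) * (R * (ampliation L * swapFactors (ampliation L))))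

theorem exists_units_cMatrix_swapFactors (r : (Matrix (n × n) (n × n) A)ˣ) (L : (Matrix n n A)ˣ)
    (hr : swapFactors (r : Matrix (n × n) (n × n) A) = ↑r⁻¹) :
    ∃ c : (Matrix (n × n) (n × n) A)ˣ, (c : Matrix (n × n) (n × n) A) = cMatrix ↑r ↑L ↑L⁻¹ ∧
      (↑c⁻¹ : Matrix (n × n) (n × n) A) = swapFactors ↑c := by
  let l₁ := Units.map (ampliation : Matrix n n A →+* Matrix (n × n) (n × n) A).toMonoidHom L
  let l₂ := Units.map
    (swapFactors.toRingHom.comp ampliation : Matrix n n A →+* Matrix (n × n) (n × n) A).toMonoidHom L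
  refine ⟨l₁⁻¹ * l₂⁻¹ * r * l₁ * l₂, ?_, ?_⟩
  · simp [cMatrix, l₁, l₂, mul_assoc]
  · simp [l₁, l₂, swapFactors_swapFactors, hr, mul_assoc]

end TwoSites

section ThreeSites

variable [Algebra ℂ A] {n : Type*} [Fintype n] [DecidableEq n]

def scalarMatrix (T : n × n → n × n → ℂ) : Matrix (n × n) (n × n) A :=
  (of T).map (algebraMap ℂ A)

/- `slot31 T` and `slot32 T` are `T₃₁` and `T₃₂` on `ℂⁿ ⊗ ℂⁿ ⊗ ℂⁿ`, whose basis vectors are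
indexed by `((i, m), t)` with `i, m, t` the first, second and third factor. -/
def slot31 (T : n × n → n × n → ℂ) : Matrix ((n × n) × n) ((n × n) × n) A :=
  of fun x y => if x.1.2 = y.1.2 then algebraMap ℂ A (T (x.2, x.1.1) (y.2, y.1.1)) else 0

def slot32 (T : n × n → n × n → ℂ) : Matrix ((n × n) × n) ((n × n) × n) A :=
  of fun x y => if x.1.1 = y.1.1 then algebraMap ℂ A (T (x.2, x.1.2) (y.2, y.1.2)) else 0

-- `L₁ v₃ = T₃₁ v₃ L₁`, in components.
def IsExchange (L : Matrix n n A) (v : n → A) (T : n × n → n × n → ℂ) : Prop :=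
  ∀ i j m, L i j * v m = ∑ p, ∑ q, T (m, i) (q, p) • (v q * L p j)

theorem IsExchange.ampliation_mul_vecSlot {L : Matrix n n A} {v : n → A}
    {T : n × n → n × n → ℂ} (h : IsExchange L v T) :
    (ampliation (ampliation L) * vecSlot v : Matrix ((n × n) × n) ((n × n) × n) A) =
      slot31 T * vecSlot v * ampliation (ampliation L) := by
  ext ⟨⟨i, m⟩, t⟩ ⟨⟨j, k⟩, u⟩
  rw [ampliation_mul_vecSlot_apply, mul_assoc, mul_apply]
  simp [vecSlot_mul_ampliation_apply, slot31, ampliation_apply, h i j t, Fintype.sum_prod_type,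
    Algebra.smul_def]

theorem IsExchange.swapFactors_mul_vecSlot {L : Matrix n n A} {v : n → A}
    {T : n × n → n × n → ℂ} (h : IsExchange L v T) :
    (ampliation (swapFactors (ampliation L)) * vecSlot v :
        Matrix ((n × n) × n) ((n × n) × n) A) =
      slot32 T * vecSlot v * ampliation (swapFactors (ampliation L)) := by
  ext ⟨⟨i, m⟩, t⟩ ⟨⟨j, k⟩, u⟩
  rw [ampliation_mul_vecSlot_apply, mul_assoc, mul_apply]
  simp [vecSlot_mul_ampliation_apply, slot32, ampliation_apply, swapFactors_apply, h m k t,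
    Fintype.sum_prod_type, Algebra.smul_def]

theorem commute_ampliation_slot32 (L : Matrix n n A) (T : n × n → n × n → ℂ) :
    Commute (ampliation (ampliation L) : Matrix ((n × n) × n) ((n × n) × n) A) (slot32 T) := by
  ext ⟨⟨i, m⟩, t⟩ ⟨⟨j, k⟩, u⟩
  simp [mul_apply, slot32, ampliation_apply, Fintype.sum_prod_type, Algebra.commutes]

theorem commute_swapFactors_slot31 (L : Matrix n n A) (T : n × n → n × n → ℂ) :
    Commute (ampliation (swapFactors (ampliation L)) : Matrix ((n × n) × n) ((n × n) × n) A)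
      (slot31 T) := by
  ext ⟨⟨i, m⟩, t⟩ ⟨⟨j, k⟩, u⟩
  simp [mul_apply, slot31, ampliation_apply, swapFactors_apply, Fintype.sum_prod_type,
    Algebra.commutes]

theorem commute_ampliation_scalarMatrix_vecSlot (R : n × n → n × n → ℂ) (v : n → A) :
    Commute (ampliation (scalarMatrix R) : Matrix ((n × n) × n) ((n × n) × n) A) (vecSlot v) :=
  (commute_ampliation_vecSlot_iff _ v).2 fun _ _ _ => Algebra.commutes _ _

theorem MixedYBE.slot_eq {R T : n × n → n × n → ℂ} (h : MixedYBE R T) :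
    (ampliation (scalarMatrix R) * slot32 T * slot31 T : Matrix ((n × n) × n) ((n × n) × n) A) =
      slot31 T * slot32 T * ampliation (scalarMatrix R) := by
  ext ⟨⟨i, m⟩, t⟩ ⟨⟨j, k⟩, u⟩
  simp only [scalarMatrix, slot32, slot31, mul_apply, ampliation_apply, map_apply, of_apply, mul_ite,
    ite_mul, zero_mul, mul_zero, Fintype.sum_prod_type, Finset.sum_ite_irrel, Finset.sum_ite_eq,
    Finset.mem_univ, ↓reduceIte, Finset.sum_const_zero, Finset.sum_ite_eq']
  simp only [← map_mul, ← map_sum, Finset.sum_mul, h i m t j k u]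

theorem commute_cMatrix_apply_of_isExchange {R T : n × n → n × n → ℂ} {L : (Matrix n n A)ˣ}
    {v : n → A} (hRT : MixedYBE R T) (hL : IsExchange ↑L v T) (x y : n × n) (t : n) :
    Commute (cMatrix (scalarMatrix R) ↑L ↑L⁻¹ x y) (v t) := by
  refine (commute_ampliation_vecSlot_iff _ v).1 ?_ x y t
  have := commute_conj_of_exchange
    (Units.map ((ampliation : Matrix (n × n) (n × n) A →+* Matrix ((n × n) × n) ((n × n) × n) A).comp
      ampliation).toMonoidHom L)
    (Units.map ((ampliation : Matrix (n × n) (n × n) A →+* Matrix ((n × n) × n) ((n × n) × n) A).comp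
      (swapFactors.toRingHom.comp ampliation)).toMonoidHom L)
    hL.ampliation_mul_vecSlot hL.swapFactors_mul_vecSlot (commute_ampliation_slot32 _ _)
    (commute_swapFactors_slot31 _ _) (commute_ampliation_scalarMatrix_vecSlot R v)
    hRT.slot_eq
  simpa [cMatrix, mul_assoc] using this

end ThreeSites

section

variable [Algebra ℂ A] {N : ℕ}

theorem UnitarityC.scalarMatrix_mul_swapFactors {R : Fin N × Fin N → Fin N × Fin N → ℂ}
    (h : UnitarityC N R) :
    scalarMatrix R * swapFactors (scalarMatrix R) = (1 : Matrix (Fin N × Fin N) _ A) := by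
  ext ⟨i, m⟩ ⟨j, k⟩
  simp only [mul_apply, scalarMatrix, swapFactors_apply, Fintype.sum_prod_type, map_apply,
    of_apply, Prod.swap_prod_mk, ← map_mul, ← map_sum, h i m j k, one_apply, Prod.mk.injEq]
  split_ifs <;> simp

theorem UnitarityC.swapFactors_mul_scalarMatrix {R : Fin N × Fin N → Fin N × Fin N → ℂ}
    (h : UnitarityC N R) :
    swapFactors (scalarMatrix R : Matrix (Fin N × Fin N) (Fin N × Fin N) A) * scalarMatrix R = 1 := by
  simpa [swapFactors_swapFactors] using
    congrArg swapFactors (h.scalarMatrix_mul_swapFactors (A := A))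

theorem cMat_eq_cMatrix_apply (R : Fin N × Fin N → Fin N × Fin N → ℂ)
    (L Linv : Fin N → Fin N → A) (i m j k : Fin N) :
    cMat N R L Linv i m j k = cMatrix (scalarMatrix R) (of L) (of Linv) (i, m) (j, k) := by
  simp only [cMat, cMatrix, mul_apply, Fintype.sum_prod_type, ampliation_apply, swapFactors_apply,
    scalarMatrix, map_apply, of_apply, mul_ite, ite_mul, zero_mul, mul_zero, Finset.sum_ite_eq,
    Finset.sum_ite_eq', Finset.mem_univ, if_true, Finset.sum_ite_irrel, Finset.sum_const_zero,
    Algebra.smul_def, mul_assoc, Prod.swap_prod_mk, Finset.mul_sum, Algebra.left_comm]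

theorem c21Mat_eq_swapFactors_cMatrix_apply
    (R : Fin N × Fin N → Fin N × Fin N → ℂ) (L Linv : Fin N → Fin N → A) (i m j k : Fin N) :
    c21Mat N R L Linv i m j k =
      swapFactors (cMatrix (scalarMatrix R) (of L) (of Linv)) (i, m) (j, k) := by
  simp only [c21Mat, cMatrix, mul_apply, Fintype.sum_prod_type, ampliation_apply, swapFactors_apply,
    scalarMatrix, map_apply, of_apply, mul_ite, ite_mul, zero_mul, mul_zero, Finset.sum_ite_eq,
    Finset.sum_ite_eq', Finset.mem_univ, if_true, Finset.sum_ite_irrel, Finset.sum_const_zero,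
    Algebra.smul_def, mul_assoc, Prod.swap_prod_mk, Finset.mul_sum, Algebra.left_comm]
  exact Finset.sum_comm.trans
    (Finset.sum_congr rfl fun _ _ => Finset.sum_congr rfl fun _ _ => Finset.sum_comm)

end

end

theorem c12_central_and_inverse_general (N : ℕ) {A : Type*} [Ring A] [Algebra ℂ A]
    (R : Fin N × Fin N → Fin N × Fin N → ℂ)
    (hYBE : YBEC N R) (hU : UnitarityC N R)
    (a ad : Fin N → A)
    (L Linv : Fin N → Fin N → A)
    (hLinv₁ : ∀ i j, (∑ k : Fin N, L i k * Linv k j) = if i = j then 1 else 0)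
    (hLinv₂ : ∀ i j, (∑ k : Fin N, Linv i k * L k j) = if i = j then 1 else 0)
    (hwb : IsWellBred N R a ad L) :
    (∀ i m j n t : Fin N,
        cMat N R L Linv i m j n * a t = a t * cMat N R L Linv i m j n ∧
        cMat N R L Linv i m j n * ad t = ad t * cMat N R L Linv i m j n) ∧
    (∀ i m j n : Fin N,
        (∑ p : Fin N, ∑ q : Fin N,
            cMat N R L Linv i m p q * c21Mat N R L Linv p q j n) =
          if i = j ∧ m = n then 1 else 0) ∧
    (∀ i m j n : Fin N,
        (∑ p : Fin N, ∑ q : Fin N,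
            c21Mat N R L Linv i m p q * cMat N R L Linv p q j n) =
          if i = j ∧ m = n then 1 else 0) := by
  let Lu : (Matrix (Fin N) (Fin N) A)ˣ :=
    ⟨of L, of Linv, Matrix.ext hLinv₁, Matrix.ext hLinv₂⟩
  let r : (Matrix (Fin N × Fin N) (Fin N × Fin N) A)ˣ :=
    ⟨scalarMatrix R, swapFactors (scalarMatrix R), hU.scalarMatrix_mul_swapFactors,
      hU.swapFactors_mul_scalarMatrix⟩
  obtain ⟨c, hc, hc_inv⟩ := exists_units_cMatrix_swapFactors r Lu rfl
  change _ = cMatrix (scalarMatrix R) (of L) (of Linv) at hc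
  have hprod (X Y : Matrix (Fin N × Fin N) (Fin N × Fin N) A) (i m j n : Fin N) :
      ∑ p, ∑ q, X (i, m) (p, q) * Y (p, q) (j, n) = (X * Y) (i, m) (j, n) := by
    rw [mul_apply, Fintype.sum_prod_type]
  refine ⟨fun i m j n t => ⟨?_, ?_⟩, fun i m j n => ?_, fun i m j n => ?_⟩
  · rw [cMat_eq_cMatrix_apply]
    exact (commute_cMatrix_apply_of_isExchange (L := Lu) hYBE.mixedYBE hwb.1 _ _ t).eq
  · rw [cMat_eq_cMatrix_apply]
    exact (commute_cMatrix_apply_of_isExchange (L := Lu) hYBE.mixedYBE_dual hwb.2 _ _ t).eq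
  · simp only [cMat_eq_cMatrix_apply, c21Mat_eq_swapFactors_cMatrix_apply, hprod, ← hc, ← hc_inv,
      c.mul_inv, one_apply, Prod.mk.injEq]
  · simp only [cMat_eq_cMatrix_apply, c21Mat_eq_swapFactors_cMatrix_apply, hprod, ← hc, ← hc_inv,
      c.inv_mul, one_apply, Prod.mk.injEq]

/-- For an invertible well-bred `L ∈ A_R ⊗ End(ℂᴺ)`, the element
`c₁₂ = L₁⁻¹L₂⁻¹R₁₂L₁L₂` is central in `A_R` (its matrix entries commute
with all `aᵢ, aᵢ†`), and `c₁₂⁻¹ = c₂₁`. -/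
theorem c12_central_and_inverse (N : ℕ) {A : Type*} [Ring A] [Algebra ℂ A]
    (R : Fin N × Fin N → Fin N × Fin N → ℂ)
    (hYBE : YBEC N R) (hU : UnitarityC N R)
    (a ad : Fin N → A) (hZF : IsZF N R a ad)
    (L Linv : Fin N → Fin N → A)
    (hLinv₁ : ∀ i j, (∑ k : Fin N, L i k * Linv k j) = if i = j then 1 else 0)
    (hLinv₂ : ∀ i j, (∑ k : Fin N, Linv i k * L k j) = if i = j then 1 else 0)
    (hwb : IsWellBred N R a ad L) :
    (∀ i m j n t : Fin N,
        cMat N R L Linv i m j n * a t = a t * cMat N R L Linv i m j n ∧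
        cMat N R L Linv i m j n * ad t = ad t * cMat N R L Linv i m j n) ∧
    (∀ i m j n : Fin N,
        (∑ p : Fin N, ∑ q : Fin N,
            cMat N R L Linv i m p q * c21Mat N R L Linv p q j n) =
          if i = j ∧ m = n then 1 else 0) ∧
    (∀ i m j n : Fin N,
        (∑ p : Fin N, ∑ q : Fin N,
            c21Mat N R L Linv i m p q * cMat N R L Linv p q j n) =
          if i = j ∧ m = n then 1 else 0) :=
  c12_central_and_inverse_general N R hYBE hU a ad L Linv hLinv₁ hLinv₂ hwb
end
end

section
/- The second vertex coefficient T⁽²⁾∞₁₂ := I − R∞₂ + R∞₂R∞₁ − R₂₁R∞₁R₁₂ is S₂-covariant: T⁽²⁾∞₂₁ = R₁₂ T⁽²⁾∞₁₂ R₂₁, where T⁽²⁾∞₂₁ is obtained by swapping the labels 1 and 2 (i.e. I − R∞₁ + R∞₁R∞₂ − R₁₂R∞₂R₂₁), assuming R satisfies the Yang–Baxter equation and unitarity R₁₂R₂₁ = I. -/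
noncomputable section

/-- Operators on `ℂᴺ ⊗ ℂᴺ`, written in the standard basis `eᵢ ⊗ eⱼ`. -/
abbrev Mat2 (N : ℕ) := Matrix (Fin N × Fin N) (Fin N × Fin N) ℂ

/-- Operators on `ℂᴺ ⊗ ℂᴺ ⊗ ℂᴺ`. -/
abbrev Mat3 (N : ℕ) := Matrix (Fin N × Fin N × Fin N) (Fin N × Fin N × Fin N) ℂ

/-- The flip operator `P (v ⊗ w) = w ⊗ v` on `ℂᴺ ⊗ ℂᴺ`. -/
def flipP (N : ℕ) : Mat2 N :=
  Matrix.of fun x y => if x.1 = y.2 ∧ x.2 = y.1 then 1 else 0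

/-- `X₁₂` : an operator on `ℂᴺ ⊗ ℂᴺ` acting on factors 1 and 2 of the triple
tensor product. -/
def leg12 (N : ℕ) (R : Mat2 N) : Mat3 N :=
  Matrix.of fun x y => R (x.1, x.2.1) (y.1, y.2.1) * (if x.2.2 = y.2.2 then 1 else 0)

/-- `X₁₃` : acting on factors 1 and 3. -/
def leg13 (N : ℕ) (R : Mat2 N) : Mat3 N :=
  Matrix.of fun x y => R (x.1, x.2.2) (y.1, y.2.2) * (if x.2.1 = y.2.1 then 1 else 0)

/-- `X₂₃` : acting on factors 2 and 3. -/
def leg23 (N : ℕ) (R : Mat2 N) : Mat3 N :=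
  Matrix.of fun x y => R (x.2.1, x.2.2) (y.2.1, y.2.2) * (if x.1 = y.1 then 1 else 0)

/-! Writing `a = R∞₁`, `b = R∞₂`, `c = R₁₂` and `d = R₂₁`, the Yang–Baxter equation reads
`a b c = c b a` and unitarity `c d = 1`. Hence `a b = a b c d = c b a d`, while conjugation by
`c` turns `1`, `a` into `c d = 1` and `c d a c d = a`; expanding `c T⁽²⁾∞₁₂ d` then gives
`T⁽²⁾∞₂₁` term by term. The only input from the matrix model is that `X ↦ X₂₃` is
multiplicative, being `X ↦ 1 ⊗ X`. -/

theorem one_sub_add_sub_eq_conj_of_yangBaxter {α : Type*} [Ring α] {a b c d : α}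
    (hYB : a * b * c = c * b * a) (hcd : c * d = 1) :
    1 - a + a * b - c * b * d = c * (1 - b + b * a - d * a * c) * d := by
  have hab : a * b = c * b * a * d := by rw [← hYB, mul_assoc _ c d, hcd, mul_one]
  calc 1 - a + a * b - c * b * d
      = c * d - c * b * d + c * b * a * d - (c * d) * a * (c * d) := by
        rw [hcd, ← hab]; noncomm_ring
    _ = c * (1 - b + b * a - d * a * c) * d := by noncomm_ring

open scoped Kronecker in
theorem leg23_eq_one_kronecker (N : ℕ) (X : Mat2 N) :
    leg23 N X = (1 : Matrix (Fin N) (Fin N) ℂ) ⊗ₖ X := by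
  ext ⟨a, b, c⟩ ⟨a', b', c'⟩
  simp [leg23, Matrix.one_apply]

theorem leg23_mul (N : ℕ) (X Y : Mat2 N) : leg23 N X * leg23 N Y = leg23 N (X * Y) := by
  rw [leg23_eq_one_kronecker, leg23_eq_one_kronecker, ← Matrix.mul_kronecker_mul, one_mul,
    leg23_eq_one_kronecker]

theorem leg23_one (N : ℕ) : leg23 N 1 = 1 := by
  rw [leg23_eq_one_kronecker, Matrix.one_kronecker_one]

/-- S₂-covariance of the second vertex coefficient
`T⁽²⁾∞₁₂ = I − R∞₂ + R∞₂ R∞₁ − R₂₁ R∞₁ R₁₂`, the legs `(∞,1,2)` being the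
three tensor factors of `ℂᴺ ⊗ ℂᴺ ⊗ ℂᴺ` in that order: swapping the labels
1 and 2 gives `T⁽²⁾∞₂₁ = R₁₂ T⁽²⁾∞₁₂ R₂₁`, where `R₂₁ = P R P`, assuming
the Yang–Baxter equation and unitarity `R₁₂ R₂₁ = I` for `R`. -/
theorem T2_S2_covariance (N : ℕ) (R : Mat2 N)
    (hYBE : leg12 N R * leg13 N R * leg23 N R = leg23 N R * leg13 N R * leg12 N R)
    (hU : R * (flipP N * R * flipP N) = 1) :
    (1 - leg12 N R + leg12 N R * leg13 N R -
        leg23 N R * leg13 N R * leg23 N (flipP N * R * flipP N)) =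
      leg23 N R *
        (1 - leg13 N R + leg13 N R * leg12 N R -
          leg23 N (flipP N * R * flipP N) * leg12 N R * leg23 N R) *
        leg23 N (flipP N * R * flipP N) := by
  have hU23 : leg23 N R * leg23 N (flipP N * R * flipP N) = 1 := by
    rw [leg23_mul, hU, leg23_one]
  exact one_sub_add_sub_eq_conj_of_yangBaxter hYBE hU23
end
end
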